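/- (Proposition) Diag(Ω¹(A)) = Ω¹_Der(A): the image of the canonical map c: Ω¹(A) → A^{Hom^A_A(Ω¹(A),A)} is isomorphic as a bimodule to Ω¹_Der(A), the sub-bimodule of C¹(Der(A),A) generated by dA, and under this identification c corresponds to the surjection i_d: Ω¹(A) → Ω¹_Der(A) determined by the universal property of Ω¹(A). -/

import Mathlib

/-!
Both `c` and `i_d` are bimodule maps out of `Ω¹(A)`, so it suffices that they have the same
kernel; the images are then isomorphic to the same quotient of `Ω¹(A)`, compatibly with `d`.
Since `x ⊗ y - xy ⊗ 1 = x • d y`, the bimodule `Ω¹(A)` is generated by `dA`. Hence a bimodule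
map `ω : Ω¹(A) → A` is determined by the derivation `δ_ω = ω ∘ d`, and it equals evaluation at
`δ_ω` after `i_d`, so `ker i_d ⊆ ker c`. Conversely, evaluation at any derivation after `i_d` is
a bimodule map, so `ker c ⊆ ker i_d`. Finally the image of `i_d` is generated by `i_d (dA) = dA`.
-/
set_option maxHeartbeats 1000000
set_option synthInstance.maxHeartbeats 400000

open TensorProduct MulOpposite

section RightTensor
variable (R : Type*) [CommRing R] (S : Type*) [Ring S]
variable (M N : Type*) [AddCommGroup M] [AddCommGroup N] [Module R M] [Module R N]
variable [Module S N] [SMulCommClass S R N]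

noncomputable def rightFactorEnd : S →+* Module.End R (M ⊗[R] N) where
  toFun s := (Module.toModuleEnd R N s).lTensor M
  map_one' := by
    show (Module.toModuleEnd R N (1 : S)).lTensor M = 1
    rw [map_one]; exact LinearMap.lTensor_id M N
  map_mul' s t := by
    show (Module.toModuleEnd R N (s * t)).lTensor M = _
    rw [map_mul]; exact LinearMap.lTensor_mul M _ _
  map_zero' := by
    show (Module.toModuleEnd R N (0 : S)).lTensor M = 0
    rw [map_zero]; exact LinearMap.lTensor_zero M
  map_add' s t := by
    show (Module.toModuleEnd R N (s + t)).lTensor M = _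
    rw [map_add]; exact LinearMap.lTensor_add M _ _

noncomputable def rightFactorModule : Module S (M ⊗[R] N) :=
  Module.compHom _ (rightFactorEnd R S M N)

end RightTensor

section Bimodule

variable (K A : Type*) [CommRing K] [Ring A] [Algebra K A]

noncomputable def leftAct (M : Type*) [AddCommGroup M] [Module (A ⊗[K] Aᵐᵒᵖ) M] :
    Module A M :=
  Module.compHom M (Algebra.TensorProduct.includeLeftRingHom : A →+* A ⊗[K] Aᵐᵒᵖ)

noncomputable def rightAct (M : Type*) [AddCommGroup M] [Module (A ⊗[K] Aᵐᵒᵖ) M] :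
    Module Aᵐᵒᵖ M :=
  Module.compHom M ((Algebra.TensorProduct.includeRight : Aᵐᵒᵖ →ₐ[K] A ⊗[K] Aᵐᵒᵖ) : Aᵐᵒᵖ →+* A ⊗[K] Aᵐᵒᵖ)

variable (M N : Type*)
  [AddCommGroup M] [Module (A ⊗[K] Aᵐᵒᵖ) M] [Module K M] [IsScalarTower K (A ⊗[K] Aᵐᵒᵖ) M]
  [AddCommGroup N] [Module (A ⊗[K] Aᵐᵒᵖ) N] [Module K N] [IsScalarTower K (A ⊗[K] Aᵐᵒᵖ) N]

/-- The bimodule structure on `M ⊗[K] N` given by `a • (m ⊗ n) • b = (a • m) ⊗ (n • b)`. -/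
noncomputable def tensorBimoduleK : Module (A ⊗[K] Aᵐᵒᵖ) (M ⊗[K] N) :=
  letI mA : Module A M := leftAct K A M
  letI nOp : Module Aᵐᵒᵖ N := rightAct K A N
  haveI h1 : SMulCommClass K A M :=
    ⟨fun k a m => smul_comm k (a ⊗ₜ[K] (1 : Aᵐᵒᵖ)) m⟩
  haveI h2 : SMulCommClass Aᵐᵒᵖ K N :=
    ⟨fun b k n => (smul_comm k ((1 : A) ⊗ₜ[K] b) n).symm⟩
  letI mod_left : Module A (M ⊗[K] N) := TensorProduct.leftModule
  letI mod_right : Module Aᵐᵒᵖ (M ⊗[K] N) := rightFactorModule K Aᵐᵒᵖ M N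
  haveI tower_left : IsScalarTower K A (M ⊗[K] N) := ⟨fun k a x => by
    induction x using TensorProduct.induction_on with
    | zero => simp
    | tmul m n =>
        show ((k • a) • m) ⊗ₜ[K] n = k • ((a • m) ⊗ₜ[K] n)
        have h : ((k • a) • m : M) = k • (a • m) := by
          show ((k • a) ⊗ₜ[K] (1 : Aᵐᵒᵖ)) • m = k • ((a ⊗ₜ[K] (1 : Aᵐᵒᵖ)) • m)
          rw [← smul_assoc, smul_tmul']
        rw [h]
        exact (smul_tmul' k (a • m) n).symm
    | add x y hx hy => simp only [smul_add, hx, hy]⟩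
  haveI tower_right : IsScalarTower K Aᵐᵒᵖ (M ⊗[K] N) := ⟨fun k b x => by
    induction x using TensorProduct.induction_on with
    | zero => simp
    | tmul m n =>
        show m ⊗ₜ[K] ((k • b) • n) = k • (m ⊗ₜ[K] (b • n))
        have h : ((k • b) • n : N) = k • (b • n) := by
          show ((1 : A) ⊗ₜ[K] (k • b)) • n = k • (((1 : A) ⊗ₜ[K] b) • n)
          rw [show ((1 : A) ⊗ₜ[K] (k • b) : A ⊗[K] Aᵐᵒᵖ) = k • ((1 : A) ⊗ₜ[K] b) from
                tmul_smul k (1 : A) b,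
              smul_assoc]
        rw [h]
        exact tmul_smul (R := K) k m (b • n)
    | add x y hx hy => simp only [smul_add, hx, hy]⟩
  haveI comm : SMulCommClass A Aᵐᵒᵖ (M ⊗[K] N) := ⟨fun a b x => by
    induction x using TensorProduct.induction_on with
    | zero => simp
    | tmul m n =>
        show a • (m ⊗ₜ[K] (b • n)) = b • ((a • m) ⊗ₜ[K] n)
        rw [smul_tmul']
        rfl
    | add x y hx hy => simp only [smul_add, hx, hy]⟩
  TensorProduct.Algebra.module

end Bimodule

section Omega
variable (K A : Type*) [CommRing K] [Ring A] [Algebra K A]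

/-- `A` as a bimodule over itself. -/
noncomputable def bimoduleBA : Module (A ⊗[K] Aᵐᵒᵖ) A := TensorProduct.Algebra.module

attribute [local instance] bimoduleBA

theorem towerBA : IsScalarTower K (A ⊗[K] Aᵐᵒᵖ) A := ⟨fun k b a => by
  show TensorProduct.Algebra.moduleAux (k • b) a = k • TensorProduct.Algebra.moduleAux b a
  rw [map_smul]
  rfl⟩

/-- `A ⊗[K] A` as a bimodule, with `a • (x ⊗ y) • b = (a*x) ⊗ (y*b)`. -/
noncomputable def bimoduleAA : Module (A ⊗[K] Aᵐᵒᵖ) (A ⊗[K] A) :=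
  haveI := towerBA K A
  tensorBimoduleK K A A A

attribute [local instance] bimoduleAA

/-- The multiplication `A ⊗[K] A → A` as a bimodule homomorphism. -/
noncomputable def mulBimodHom : (A ⊗[K] A) →ₗ[A ⊗[K] Aᵐᵒᵖ] A where
  toFun := LinearMap.mul' K A
  map_add' := map_add _
  map_smul' b x := by
    show LinearMap.mul' K A (b • x) = b • LinearMap.mul' K A x
    induction b using TensorProduct.induction_on with
    | zero => first
      | simp
      | rw [zero_smul, zero_smul, map_zero]
      | exact (congrArg (LinearMap.mul' K A) (zero_smul (A ⊗[K] Aᵐᵒᵖ) x)).trans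
          ((map_zero _).trans (zero_smul (A ⊗[K] Aᵐᵒᵖ) (LinearMap.mul' K A x)).symm)
      | erw [zero_smul, zero_smul, map_zero]
    | tmul a0 b0 =>
        induction x using TensorProduct.induction_on with
        | zero => simp
        | tmul x1 y1 =>
            show LinearMap.mul' K A ((a0 ⊗ₜ[K] b0 : A ⊗[K] Aᵐᵒᵖ) • (x1 ⊗ₜ[K] y1))
              = (a0 ⊗ₜ[K] b0 : A ⊗[K] Aᵐᵒᵖ) • (LinearMap.mul' K A (x1 ⊗ₜ[K] y1))
            have h1 : ((a0 ⊗ₜ[K] b0 : A ⊗[K] Aᵐᵒᵖ) • (x1 ⊗ₜ[K] y1) : A ⊗[K] A)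
                = (a0 * (x1 * 1)) ⊗ₜ[K] (1 * (y1 * unop b0)) := rfl
            have h2 : ((a0 ⊗ₜ[K] b0 : A ⊗[K] Aᵐᵒᵖ) • (x1 * y1) : A)
                = a0 * (x1 * y1 * unop b0) := rfl
            rw [LinearMap.mul'_apply, h1, h2, LinearMap.mul'_apply]
            noncomm_ring
        | add x y hx hy =>
            rw [smul_add, map_add, map_add, hx, hy, smul_add]
    | add b c hb hc =>
        rw [add_smul, map_add, hb, hc, add_smul]

/-- `Ω¹(A)`: the kernel of the multiplication, as a sub-bimodule of `A ⊗[K] A`. -/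
noncomputable def Omega1 : Submodule (A ⊗[K] Aᵐᵒᵖ) (A ⊗[K] A) :=
  LinearMap.ker (mulBimodHom K A)

/-- `Ω¹(A)` as a type, with its bimodule structure. -/
def OmegaTy : Type _ := ↥(Omega1 K A)

noncomputable instance : AddCommGroup (OmegaTy K A) :=
  inferInstanceAs (AddCommGroup ↥(Omega1 K A))

noncomputable instance : Module (A ⊗[K] Aᵐᵒᵖ) (OmegaTy K A) :=
  inferInstanceAs (Module (A ⊗[K] Aᵐᵒᵖ) ↥(Omega1 K A))

/-- The universal derivation `d : A → Ω¹(A)`, `d a = 1 ⊗ a - a ⊗ 1`. -/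
noncomputable def dOmega (a : A) : OmegaTy K A :=
  (⟨(1 : A) ⊗ₜ[K] a - a ⊗ₜ[K] (1 : A), by
    simp [Omega1, LinearMap.mem_ker, mulBimodHom]⟩ : ↥(Omega1 K A))

end Omega

section Der
variable (K A : Type*) [CommRing K] [Ring A] [Algebra K A]

/-- `Der(A)`: the `K`-module of derivations of `A` into itself. -/
def derSub : Submodule K (A →ₗ[K] A) where
  carrier := {f : A →ₗ[K] A | ∀ a b : A, f (a * b) = a * f b + f a * b}
  add_mem' := by
    intro f g hf hg a b
    simp only [LinearMap.add_apply, hf a b, hg a b, mul_add, add_mul]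
    abel
  zero_mem' := by intro a b; simp
  smul_mem' := by
    intro k f hf a b
    simp only [LinearMap.smul_apply, hf a b, smul_add, Algebra.mul_smul_comm,
      Algebra.smul_mul_assoc]

/-- The map `d : A → C¹(Der(A), A)`, `(d a) δ = δ a`. -/
def dDer (a : A) : (derSub K A) →ₗ[K] A where
  toFun δ := (δ : A →ₗ[K] A) a
  map_add' δ ε := by simp
  map_smul' k δ := by simp

/-- The bimodule structure on `C¹(Der(A), A)`, `(a • f • b) δ = a * f δ * b`. -/
noncomputable def bimoduleC1 : Module (A ⊗[K] Aᵐᵒᵖ) ((derSub K A) →ₗ[K] A) :=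
  haveI h1 : SMulCommClass A Aᵐᵒᵖ ((derSub K A) →ₗ[K] A) :=
    ⟨fun a b f => LinearMap.ext fun x => smul_comm a b (f x)⟩
  haveI h2 : IsScalarTower K A ((derSub K A) →ₗ[K] A) :=
    ⟨fun k a f => LinearMap.ext fun x => smul_assoc k a (f x)⟩
  haveI h3 : IsScalarTower K Aᵐᵒᵖ ((derSub K A) →ₗ[K] A) :=
    ⟨fun k b f => LinearMap.ext fun x => smul_assoc k b (f x)⟩
  TensorProduct.Algebra.module

attribute [local instance] bimoduleC1

/-- `Ω¹_Der(A)`: the sub-bimodule of `C¹(Der(A), A)` generated by `dA`. -/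
noncomputable def omegaDer : Submodule (A ⊗[K] Aᵐᵒᵖ) ((derSub K A) →ₗ[K] A) :=
  Submodule.span _ (Set.range (dDer K A))

end Der

namespace LinearMap

variable {R M N P : Type*} [Ring R] [AddCommGroup M] [AddCommGroup N] [AddCommGroup P]
  [Module R M] [Module R N] [Module R P]

noncomputable def rangeEquivOfKerEq (f : M →ₗ[R] N) (g : M →ₗ[R] P) (h : ker f = ker g) :
    range f ≃ₗ[R] range g :=
  f.quotKerEquivRange.symm ≪≫ₗ Submodule.quotEquivOfEq _ _ h ≪≫ₗ g.quotKerEquivRange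

theorem rangeEquivOfKerEq_rangeRestrict (f : M →ₗ[R] N) (g : M →ₗ[R] P) (h : ker f = ker g)
    (x : M) : rangeEquivOfKerEq f g h (f.rangeRestrict x) = g.rangeRestrict x := by
  have hf : f.rangeRestrict x = f.quotKerEquivRange (Submodule.Quotient.mk x) :=
    Subtype.ext (quotKerEquivRange_apply_mk f x).symm
  rw [rangeEquivOfKerEq, hf, LinearEquiv.trans_apply, LinearEquiv.trans_apply,
    LinearEquiv.symm_apply_apply, Submodule.quotEquivOfEq_mk]
  exact Subtype.ext (quotKerEquivRange_apply_mk g x)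

end LinearMap

def AddMonoidHom.toLinearMapOfTmulSmul {R S T M N : Type*} [CommSemiring R] [Semiring S]
    [Algebra R S] [Semiring T] [Algebra R T] [AddCommMonoid M] [AddCommMonoid N]
    [Module (S ⊗[R] T) M] [Module (S ⊗[R] T) N] (f : M →+ N)
    (h : ∀ (s : S) (t : T) (x : M), f ((s ⊗ₜ[R] t) • x) = (s ⊗ₜ[R] t) • f x) :
    M →ₗ[S ⊗[R] T] N where
  toFun := f
  map_add' := f.map_add
  map_smul' b x := by
    induction b using TensorProduct.induction_on with
    | zero => simp
    | tmul s t => exact h s t x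
    | add b c hb hc => simp only [add_smul, map_add, hb, hc, RingHom.id_apply]

section Differentials

variable (K A : Type*) [CommRing K] [Ring A] [Algebra K A]

attribute [local instance] bimoduleBA bimoduleAA bimoduleC1

theorem bimoduleBA_tmul_smul (a : A) (b : Aᵐᵒᵖ) (m : A) :
    ((a ⊗ₜ[K] b : A ⊗[K] Aᵐᵒᵖ) • m : A) = a * (m * unop b) := rfl

theorem bimoduleAA_tmul_smul_tmul (a : A) (b : Aᵐᵒᵖ) (x y : A) :
    ((a ⊗ₜ[K] b : A ⊗[K] Aᵐᵒᵖ) • (x ⊗ₜ[K] y) : A ⊗[K] A) = (a * x) ⊗ₜ[K] (y * unop b) := by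
  change (a * (x * 1)) ⊗ₜ[K] (1 * (y * unop b)) = _
  rw [mul_one, one_mul]

theorem bimoduleBA_algebraMap_smul (k : K) (m : A) :
    (algebraMap K (A ⊗[K] Aᵐᵒᵖ) k • m : A) = k • m := by
  rw [Algebra.TensorProduct.algebraMap_apply, bimoduleBA_tmul_smul, unop_one, mul_one,
    Algebra.smul_def]

theorem derSub_apply_one (δ : derSub K A) : (δ : A →ₗ[K] A) 1 = 0 := by
  have h := δ.2 1 1
  rw [one_mul, one_mul, mul_one] at h
  exact left_eq_add.mp h

theorem dOmega_add (a b : A) : dOmega K A (a + b) = dOmega K A a + dOmega K A b := by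
  apply Subtype.ext
  change (1 : A) ⊗ₜ[K] (a + b) - (a + b) ⊗ₜ[K] 1 = (1 ⊗ₜ a - a ⊗ₜ 1) + (1 ⊗ₜ b - b ⊗ₜ 1)
  rw [tmul_add, add_tmul]
  abel

theorem dOmega_smul (k : K) (a : A) :
    dOmega K A (k • a) = algebraMap K (A ⊗[K] Aᵐᵒᵖ) k • dOmega K A a := by
  apply Subtype.ext
  change (1 : A) ⊗ₜ[K] (k • a) - (k • a) ⊗ₜ[K] 1
    = algebraMap K (A ⊗[K] Aᵐᵒᵖ) k • ((1 : A) ⊗ₜ[K] a - a ⊗ₜ[K] 1)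
  simp only [Algebra.TensorProduct.algebraMap_apply, smul_sub, bimoduleAA_tmul_smul_tmul,
    unop_one, mul_one, ← Algebra.smul_def]
  rw [Algebra.algebraMap_eq_smul_one, smul_tmul k (1 : A) a]

theorem dOmega_mul (a b : A) :
    dOmega K A (a * b)
      = (a ⊗ₜ[K] (1 : Aᵐᵒᵖ)) • dOmega K A b + ((1 : A) ⊗ₜ[K] op b) • dOmega K A a := by
  apply Subtype.ext
  change (1 : A) ⊗ₜ[K] (a * b) - (a * b) ⊗ₜ[K] 1
    = (a ⊗ₜ[K] (1 : Aᵐᵒᵖ)) • ((1 : A) ⊗ₜ[K] b - b ⊗ₜ[K] 1)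
      + ((1 : A) ⊗ₜ[K] op b) • ((1 : A) ⊗ₜ[K] a - a ⊗ₜ[K] 1)
  simp only [smul_sub, bimoduleAA_tmul_smul_tmul, mul_one, one_mul, unop_one, unop_op]
  abel

theorem sub_mul'_tmul_one_mem_Omega1 (z : A ⊗[K] A) :
    z - LinearMap.mul' K A z ⊗ₜ[K] (1 : A) ∈ Omega1 K A := by
  change LinearMap.mul' K A (z - LinearMap.mul' K A z ⊗ₜ[K] (1 : A)) = 0
  rw [map_sub, LinearMap.mul'_apply, mul_one, sub_self]

noncomputable def omega1Retraction (z : A ⊗[K] A) : OmegaTy K A :=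
  ⟨z - LinearMap.mul' K A z ⊗ₜ[K] 1, sub_mul'_tmul_one_mem_Omega1 K A z⟩

theorem omega1Retraction_tmul (x y : A) :
    omega1Retraction K A (x ⊗ₜ[K] y) = (x ⊗ₜ[K] (1 : Aᵐᵒᵖ)) • dOmega K A y := by
  apply Subtype.ext
  change x ⊗ₜ[K] y - LinearMap.mul' K A (x ⊗ₜ y) ⊗ₜ[K] 1
    = (x ⊗ₜ[K] (1 : Aᵐᵒᵖ)) • ((1 : A) ⊗ₜ[K] y - y ⊗ₜ[K] 1)
  simp only [smul_sub, bimoduleAA_tmul_smul_tmul, LinearMap.mul'_apply, mul_one, unop_one]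

theorem omega1Retraction_zero : omega1Retraction K A 0 = 0 := by
  apply Subtype.ext
  change (0 : A ⊗[K] A) - LinearMap.mul' K A 0 ⊗ₜ[K] 1 = 0
  rw [map_zero, zero_tmul, sub_zero]

theorem omega1Retraction_add (z w : A ⊗[K] A) :
    omega1Retraction K A (z + w) = omega1Retraction K A z + omega1Retraction K A w := by
  apply Subtype.ext
  change z + w - LinearMap.mul' K A (z + w) ⊗ₜ[K] 1
    = (z - LinearMap.mul' K A z ⊗ₜ[K] 1) + (w - LinearMap.mul' K A w ⊗ₜ[K] 1)
  rw [map_add, add_tmul]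
  abel

theorem omega1Retraction_coe (x : OmegaTy K A) : omega1Retraction K A x.1 = x := by
  apply Subtype.ext
  change x.1 - LinearMap.mul' K A x.1 ⊗ₜ[K] 1 = x.1
  rw [show LinearMap.mul' K A x.1 = 0 from x.2, zero_tmul, sub_zero]

theorem span_range_dOmega :
    Submodule.span (A ⊗[K] Aᵐᵒᵖ) (Set.range (dOmega K A)) = ⊤ := by
  refine eq_top_iff.mpr fun x _ => ?_
  rw [← omega1Retraction_coe K A x]
  induction x.1 using TensorProduct.induction_on with
  | zero => rw [omega1Retraction_zero]; exact zero_mem _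
  | tmul x y =>
    rw [omega1Retraction_tmul]
    exact Submodule.smul_mem _ _ (Submodule.subset_span ⟨y, rfl⟩)
  | add z w hz hw => rw [omega1Retraction_add]; exact add_mem hz hw

noncomputable def tensorToC1 : A ⊗[K] A →ₗ[K] (derSub K A →ₗ[K] A) :=
  TensorProduct.lift (LinearMap.mk₂ K (fun x y => (LinearMap.mulLeft K x).comp (dDer K A y))
    (fun x₁ x₂ y => by ext δ; simp [add_mul])
    (fun k x y => by ext δ; simp)
    (fun x y₁ y₂ => by ext δ; simp [dDer, mul_add])
    (fun k x y => by ext δ; simp [dDer]))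

@[simp] theorem tensorToC1_tmul_apply (x y : A) (δ : derSub K A) :
    tensorToC1 K A (x ⊗ₜ[K] y) δ = x * (δ : A →ₗ[K] A) y := rfl

theorem tensorToC1_tmul_smul_apply (a : A) (b : Aᵐᵒᵖ) (z : A ⊗[K] A) (δ : derSub K A) :
    tensorToC1 K A ((a ⊗ₜ[K] b : A ⊗[K] Aᵐᵒᵖ) • z) δ
      = a * (tensorToC1 K A z δ * unop b)
        + a * (LinearMap.mul' K A z * (δ : A →ₗ[K] A) (unop b)) := by
  induction z using TensorProduct.induction_on with
  | zero => simp
  | tmul x y =>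
    rw [bimoduleAA_tmul_smul_tmul, tensorToC1_tmul_apply, tensorToC1_tmul_apply,
      LinearMap.mul'_apply, δ.2 y (unop b)]
    noncomm_ring
  | add z w hz hw =>
    simp only [smul_add, map_add, LinearMap.add_apply, hz, hw]
    noncomm_ring

noncomputable def iD : OmegaTy K A →ₗ[A ⊗[K] Aᵐᵒᵖ] (derSub K A →ₗ[K] A) :=
  AddMonoidHom.toLinearMapOfTmulSmul
    (AddMonoidHom.mk' (fun x : OmegaTy K A => tensorToC1 K A x.1) fun _ _ => map_add _ _ _)
    fun a b x => by
      ext δ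
      have hx : LinearMap.mul' K A x.1 = 0 := x.2
      change tensorToC1 K A ((a ⊗ₜ[K] b : A ⊗[K] Aᵐᵒᵖ) • x.1) δ = _
      rw [tensorToC1_tmul_smul_apply, hx, zero_mul, mul_zero, add_zero]
      rfl

theorem iD_dOmega (a : A) : iD K A (dOmega K A a) = dDer K A a := by
  ext δ
  change tensorToC1 K A ((1 : A) ⊗ₜ[K] a - a ⊗ₜ[K] 1) δ = (δ : A →ₗ[K] A) a
  rw [map_sub, LinearMap.sub_apply, tensorToC1_tmul_apply, tensorToC1_tmul_apply,
    derSub_apply_one, one_mul, mul_zero, sub_zero]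

theorem range_iD : LinearMap.range (iD K A) = omegaDer K A := by
  rw [LinearMap.range_eq_map, ← span_range_dOmega, LinearMap.map_span, ← Set.range_comp]
  congr
  exact funext (iD_dOmega K A)

noncomputable def evalDer (δ : derSub K A) : (derSub K A →ₗ[K] A) →ₗ[A ⊗[K] Aᵐᵒᵖ] A :=
  AddMonoidHom.toLinearMapOfTmulSmul (AddMonoidHom.mk' (fun f => f δ) fun _ _ => rfl)
    fun _ _ _ => rfl

noncomputable def derOfBimodHom (ω : OmegaTy K A →ₗ[A ⊗[K] Aᵐᵒᵖ] A) : derSub K A :=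
  ⟨{ toFun a := ω (dOmega K A a)
     map_add' a b := by rw [dOmega_add, map_add]
     map_smul' k a := by rw [dOmega_smul, map_smul, bimoduleBA_algebraMap_smul]; rfl },
   fun a b => by
     change ω (dOmega K A (a * b)) = a * ω (dOmega K A b) + ω (dOmega K A a) * b
     rw [dOmega_mul, map_add, map_smul, map_smul, bimoduleBA_tmul_smul, bimoduleBA_tmul_smul]
     simp only [mul_one, one_mul, unop_op, unop_one]⟩

theorem evalDer_derOfBimodHom_comp_iD (ω : OmegaTy K A →ₗ[A ⊗[K] Aᵐᵒᵖ] A) :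
    (evalDer K A (derOfBimodHom K A ω)).comp (iD K A) = ω :=
  LinearMap.ext_on_range (span_range_dOmega K A) fun a => by
    change (iD K A (dOmega K A a)) (derOfBimodHom K A ω) = ω (dOmega K A a)
    rw [iD_dOmega]
    rfl

end Differentials

section Statement
variable (K A : Type*) [CommRing K] [Ring A] [Algebra K A]

attribute [local instance] bimoduleBA bimoduleAA bimoduleC1

variable (M : Type*) [AddCommGroup M] [Module (A ⊗[K] Aᵐᵒᵖ) M]

/-- The canonical bimodule homomorphism `c : M → A^{Hom(M,A)}`, `c m = (ω m)_ω`. -/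
noncomputable def cMap : M →ₗ[A ⊗[K] Aᵐᵒᵖ] ((M →ₗ[A ⊗[K] Aᵐᵒᵖ] A) → A) :=
  LinearMap.pi fun ω => ω

/-- `Diag(M)`: the image of the canonical map `c : M → A^{Hom(M,A)}`. -/
noncomputable def diagSub : Submodule (A ⊗[K] Aᵐᵒᵖ) ((M →ₗ[A ⊗[K] Aᵐᵒᵖ] A) → A) :=
  LinearMap.range (cMap K A M)

theorem ker_cMap_eq_ker_iD : LinearMap.ker (cMap K A (OmegaTy K A)) = LinearMap.ker (iD K A) := by
  ext x
  simp only [LinearMap.mem_ker]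
  constructor
  · intro hx
    ext δ
    exact congrFun hx ((evalDer K A δ).comp (iD K A))
  · intro hx
    funext ω
    change ω x = 0
    rw [← evalDer_derOfBimodHom_comp_iD K A ω, LinearMap.comp_apply, hx, map_zero]

/-- Proposition: `Diag(Ω¹(A)) = Ω¹_Der(A)`: the image of the canonical map
`c : Ω¹(A) → A^{Hom(Ω¹(A),A)}` is isomorphic as a bimodule to `Ω¹_Der(A)`, the
sub-bimodule of `C¹(Der(A),A)` generated by `dA`; the identification sends
`c (d a)` to `d a ∈ Ω¹_Der(A)` for all `a ∈ A` (and is hence induced by the canonical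
surjection `i_d : Ω¹(A) → Ω¹_Der(A)` determined by the universal property of `Ω¹(A)`). -/
theorem diag_omega1_eq_omegaDer :
    ∃ e : (diagSub K A (OmegaTy K A)) ≃ₗ[A ⊗[K] Aᵐᵒᵖ] (omegaDer K A),
      ∀ a : A,
        e ((cMap K A (OmegaTy K A)).rangeRestrict (dOmega K A a))
          = ⟨dDer K A a, Submodule.subset_span (Set.mem_range_self a)⟩ := by
  refine ⟨LinearMap.rangeEquivOfKerEq _ _ (ker_cMap_eq_ker_iD K A) ≪≫ₗ
    LinearEquiv.ofEq _ _ (range_iD K A), fun a => Subtype.ext ?_⟩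
  exact (congrArg Subtype.val (LinearMap.rangeEquivOfKerEq_rangeRestrict _ _ _ _)).trans
    (iD_dOmega K A a)

end Statement
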